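/- Let A, B be finite algebras in a Taylor variety, R a subdirect subalgebra of A × B, C a minimal absorbing subalgebra of A, and D a minimal absorbing subalgebra of B. If (C × D) ∩ R is nonempty, then (C × D) ∩ R is subdirect in C × D. -/

import Mathlib

structure Signature : Type 1 where
  symbols : Type
  arity : symbols → ℕ

structure UAlgebra (σ : Signature) : Type 1 where
  carrier : Type
  op : ∀ s : σ.symbols, (Fin (σ.arity s) → carrier) → carrier

inductive Term (σ : Signature) (n : ℕ) : Type
  | var : Fin n → Term σ n
  | app (s : σ.symbols) : (Fin (σ.arity s) → Term σ n) → Term σ n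

def Term.eval {σ : Signature} (A : UAlgebra σ) {n : ℕ} :
    Term σ n → (Fin n → A.carrier) → A.carrier
  | .var i, x => x i
  | .app s ts, x => A.op s fun j => Term.eval A (ts j) x

/-- `B` is a subuniverse of the algebra `A`. -/
def Subuniverse {σ : Signature} (A : UAlgebra σ) (B : Set A.carrier) : Prop :=
  ∀ (s : σ.symbols) (a : Fin (σ.arity s) → A.carrier), (∀ i, a i ∈ B) → A.op s a ∈ B

/-- `B` absorbs `A` with respect to the term `t`. -/
def AbsorbsWith {σ : Signature} (A : UAlgebra σ) (B : Set A.carrier) {n : ℕ} (t : Term σ n) : Prop :=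
  ∀ (k : Fin n) (a : Fin n → A.carrier), (∀ i, i ≠ k → a i ∈ B) → t.eval A a ∈ B

/-- `C` absorbs the subalgebra with universe `B` (inside the ambient algebra `A`)
with respect to the term `t`. -/
def AbsorbsWithIn {σ : Signature} (A : UAlgebra σ) (B C : Set A.carrier) {n : ℕ}
    (t : Term σ n) : Prop :=
  ∀ (k : Fin n) (a : Fin n → A.carrier), (∀ i, a i ∈ B) → (∀ i, i ≠ k → a i ∈ C) →
    t.eval A a ∈ C

/-- `B` is an absorbing subalgebra (subuniverse) of `A`. -/
def Absorbing {σ : Signature} (A : UAlgebra σ) (B : Set A.carrier) : Prop :=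
  Subuniverse A B ∧ ∃ (n : ℕ) (t : Term σ n), AbsorbsWith A B t

/-- `B` is a proper absorbing subalgebra of `A`: `∅ ≠ B ≠ A`. -/
def ProperAbsorbing {σ : Signature} (A : UAlgebra σ) (B : Set A.carrier) : Prop :=
  Absorbing A B ∧ B.Nonempty ∧ B ≠ Set.univ

/-- `C` is a minimal absorbing subalgebra of `A`. -/
def MinAbsorbing {σ : Signature} (A : UAlgebra σ) (C : Set A.carrier) : Prop :=
  Absorbing A C ∧ C.Nonempty ∧ ∀ C' ⊆ C, Absorbing A C' → C'.Nonempty → C' = C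

/-- All (basic, equivalently term) operations of `A` are idempotent. -/
def Idempotent {σ : Signature} (A : UAlgebra σ) : Prop :=
  ∀ (s : σ.symbols) (a : A.carrier), A.op s (fun _ => a) = a

/-- `t` is a Taylor term of the algebra `A`. -/
def IsTaylorTerm {σ : Signature} (A : UAlgebra σ) {k : ℕ} (t : Term σ k) : Prop :=
  (∀ a : A.carrier, t.eval A (fun _ => a) = a) ∧
  ∀ j : Fin k, ∃ u v : Fin k → Fin 2, u j = 0 ∧ v j = 1 ∧
    ∀ x : Fin 2 → A.carrier, t.eval A (fun i => x (u i)) = t.eval A (fun i => x (v i))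

/-- The product of two algebras of the same signature. -/
def UAlgebra.prod {σ : Signature} (A B : UAlgebra σ) : UAlgebra σ where
  carrier := A.carrier × B.carrier
  op s x := (A.op s fun i => (x i).1, B.op s fun i => (x i).2)

/-- The `k`-th power of an algebra. -/
def UAlgebra.pow {σ : Signature} (A : UAlgebra σ) (k : ℕ) : UAlgebra σ where
  carrier := Fin k → A.carrier
  op s x := fun j => A.op s fun i => x i j

/-- `R ⊆ A × B` is subdirect: both projections are onto. -/
def Subdirect2 {α β : Type} (R : Set (α × β)) : Prop :=
  (∀ a, ∃ b, (a, b) ∈ R) ∧ ∀ b, ∃ a, (a, b) ∈ R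

/-- `a` and `a'` are linked in `R` (connected in the bipartite graph of `R`). -/
def LinkedPair {α β : Type} (R : Set (α × β)) (a a' : α) : Prop :=
  Relation.ReflTransGen (fun x y => ∃ b, (x, b) ∈ R ∧ (y, b) ∈ R) a a'

/-- `R` is linked: any two elements of the projection of `R` to the first
coordinate are `R`-linked. -/
def IsLinked {α β : Type} (R : Set (α × β)) : Prop :=
  ∀ a a', (∃ b, (a, b) ∈ R) → (∃ b, (a', b) ∈ R) → LinkedPair R a a'

/-- Cyclic shift of a `k`-tuple. -/
def cycShift {α : Type} {k : ℕ} (x : Fin k → α) : Fin k → α := fun i =>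
  x ⟨(i.val + 1) % k, Nat.mod_lt _ (Nat.lt_of_le_of_lt (Nat.zero_le _) i.isLt)⟩

/-- `t` is a cyclic term of `A`: idempotent and invariant under cyclic shift. -/
def IsCyclicTerm {σ : Signature} (A : UAlgebra σ) {k : ℕ} (t : Term σ k) : Prop :=
  (∀ a : A.carrier, t.eval A (fun _ => a) = a) ∧
  ∀ x : Fin k → A.carrier, t.eval A x = t.eval A (cycShift x)

/-!
The set `E = π₁((C × D) ∩ R)` is a subuniverse of `A` contained in `C`. It also absorbs `A`:
take a term `w` with respect to which both `C` absorbs `A` and `D` absorbs `B` (a star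
composition of absorbing terms for `C` and `D`); if all arguments of `w` but one lie in `E`,
pick `R`-partners of them in `D` and any `R`-partner of the remaining one, and apply `w` in
`A × B`. Since `E` is nonempty, minimality of `C` forces `E = C`. The other projection follows by
swapping the coordinates.
-/

variable {σ : Signature}

namespace Term

def subst {n m : ℕ} : Term σ n → (Fin n → Term σ m) → Term σ m
  | .var i, f => f i
  | .app s ts, f => .app s fun j => subst (ts j) f

theorem eval_subst (A : UAlgebra σ) {n m : ℕ} (t : Term σ n) (f : Fin n → Term σ m)
    (x : Fin m → A.carrier) : (t.subst f).eval A x = t.eval A fun i => (f i).eval A x := by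
  induction t with
  | var i => rfl
  | app s ts ih => simp only [subst, eval, ih]

theorem eval_mem {A : UAlgebra σ} {B : Set A.carrier} (hB : Subuniverse A B) {n : ℕ}
    (t : Term σ n) {x : Fin n → A.carrier} (hx : ∀ i, x i ∈ B) : t.eval A x ∈ B := by
  induction t with
  | var i => exact hx i
  | app s ts ih => exact hB s _ ih

theorem eval_prod (A B : UAlgebra σ) {n : ℕ} (t : Term σ n) (x : Fin n → (A.prod B).carrier) :
    t.eval (A.prod B) x = (t.eval A fun i => (x i).1, t.eval B fun i => (x i).2) := by
  induction t with
  | var i => rfl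
  | app s ts ih => simp only [eval, ih]; rfl

def star {n m : ℕ} (t₁ : Term σ n) (t₂ : Term σ m) : Term σ (n * m) :=
  t₁.subst fun i => t₂.subst fun j => var (finProdFinEquiv (i, j))

theorem eval_star (A : UAlgebra σ) {n m : ℕ} (t₁ : Term σ n) (t₂ : Term σ m)
    (x : Fin (n * m) → A.carrier) :
    (t₁.star t₂).eval A x = t₁.eval A fun i => t₂.eval A fun j => x (finProdFinEquiv (i, j)) := by
  simp only [star, eval_subst]
  rfl

end Term

section Absorption

variable {A B : UAlgebra σ} {C : Set A.carrier} {D : Set B.carrier}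

theorem AbsorbsWith.star_right (hC : Subuniverse A C) {n m : ℕ} {t₁ : Term σ n}
    (h : AbsorbsWith A C t₁) (t₂ : Term σ m) : AbsorbsWith A C (t₁.star t₂) := by
  intro k a ha
  obtain ⟨⟨i₀, j₀⟩, rfl⟩ := finProdFinEquiv.surjective k
  rw [Term.eval_star]
  refine h i₀ _ fun i hi => Term.eval_mem hC t₂ fun j => ha _ fun heq => ?_
  exact hi (congrArg Prod.fst (finProdFinEquiv.injective heq))

theorem AbsorbsWith.star_left (hC : Subuniverse A C) {n m : ℕ} {t₂ : Term σ m}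
    (h : AbsorbsWith A C t₂) (t₁ : Term σ n) : AbsorbsWith A C (t₁.star t₂) := by
  intro k a ha
  obtain ⟨⟨i₀, j₀⟩, rfl⟩ := finProdFinEquiv.surjective k
  rw [Term.eval_star]
  refine Term.eval_mem hC t₁ fun i => ?_
  by_cases hi : i = i₀
  · subst hi
    refine h j₀ _ fun j hj => ha _ fun heq => ?_
    exact hj (congrArg Prod.snd (finProdFinEquiv.injective heq))
  · refine Term.eval_mem hC t₂ fun j => ha _ fun heq => ?_
    exact hi (congrArg Prod.fst (finProdFinEquiv.injective heq))

theorem Absorbing.exists_common_term (hC : Absorbing A C) (hD : Absorbing B D) :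
    ∃ (n : ℕ) (w : Term σ n), AbsorbsWith A C w ∧ AbsorbsWith B D w := by
  obtain ⟨hCsub, _, t₁, h₁⟩ := hC
  obtain ⟨hDsub, _, t₂, h₂⟩ := hD
  exact ⟨_, t₁.star t₂, h₁.star_right hCsub t₂, h₂.star_left hDsub t₁⟩

theorem Subuniverse.prod (hC : Subuniverse A C) (hD : Subuniverse B D) :
    Subuniverse (A.prod B) (C ×ˢ D) :=
  fun s _ hx => ⟨hC s _ fun i => (hx i).1, hD s _ fun i => (hx i).2⟩

theorem Subuniverse.inter {S T : Set A.carrier} (hS : Subuniverse A S) (hT : Subuniverse A T) :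
    Subuniverse A (S ∩ T) :=
  fun s x hx => ⟨hS s x fun i => (hx i).1, hT s x fun i => (hx i).2⟩

theorem Subuniverse.image_fst {S : Set (A.carrier × B.carrier)} (hS : Subuniverse (A.prod B) S) :
    Subuniverse A (Prod.fst '' S) := by
  intro s a ha
  choose x hxS hxa using ha
  refine ⟨(A.prod B).op s x, hS s x hxS, ?_⟩
  show A.op s (fun i => (x i).1) = A.op s a
  simp only [hxa]

theorem Subuniverse.preimage_swap {R : Set (A.carrier × B.carrier)}
    (hR : Subuniverse (A.prod B) R) : Subuniverse (B.prod A) (Prod.swap ⁻¹' R) :=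
  fun s x hx => hR s (fun i => (x i).swap) hx

theorem AbsorbsWith.image_fst_inter {R : Set (A.carrier × B.carrier)} {n : ℕ} {w : Term σ n}
    (hC : AbsorbsWith A C w) (hD : AbsorbsWith B D w) (hR : Subuniverse (A.prod B) R)
    (hR₁ : ∀ a, ∃ b, (a, b) ∈ R) : AbsorbsWith A (Prod.fst '' ((C ×ˢ D) ∩ R)) w := by
  intro k a ha
  have partner : ∀ i, ∃ b, (a i, b) ∈ R ∧ (i ≠ k → b ∈ D) := by
    intro i
    by_cases hik : i = k
    · obtain ⟨b, hb⟩ := hR₁ (a i)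
      exact ⟨b, hb, absurd hik⟩
    · obtain ⟨⟨_, b⟩, ⟨⟨-, hbD⟩, hab⟩, rfl⟩ := ha i hik
      exact ⟨b, hab, fun _ => hbD⟩
  choose b hbR hbD using partner
  have hwR : (w.eval A a, w.eval B b) ∈ R :=
    Term.eval_prod A B w (fun i => (a i, b i)) ▸ Term.eval_mem hR w hbR
  have haC : ∀ i, i ≠ k → a i ∈ C := fun i hi => by
    obtain ⟨p, ⟨⟨hc, -⟩, -⟩, hpa⟩ := ha i hi
    exact hpa ▸ hc
  exact ⟨_, ⟨⟨hC k a haC, hD k b hbD⟩, hwR⟩, rfl⟩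

theorem MinAbsorbing.exists_mem_of_inter_nonempty {R : Set (A.carrier × B.carrier)}
    (hC : MinAbsorbing A C) (hD : Absorbing B D) (hR : Subuniverse (A.prod B) R)
    (hR₁ : ∀ a, ∃ b, (a, b) ∈ R) (hne : ((C ×ˢ D) ∩ R).Nonempty) :
    ∀ c ∈ C, ∃ d ∈ D, (c, d) ∈ R := by
  obtain ⟨hCabs, -, hCmin⟩ := hC
  obtain ⟨n, w, hwC, hwD⟩ := hCabs.exists_common_term hD
  have hE : Prod.fst '' ((C ×ˢ D) ∩ R) = C :=
    hCmin _ (Set.image_subset_iff.2 fun p hp => hp.1.1)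
      ⟨((hCabs.1.prod hD.1).inter hR).image_fst, n, w, hwC.image_fst_inter hwD hR hR₁⟩
      (hne.image _)
  intro c hc
  obtain ⟨⟨_, d⟩, ⟨⟨-, hd⟩, hcd⟩, rfl⟩ := hE.symm ▸ hc
  exact ⟨d, hd, hcd⟩

end Absorption

theorem minabs_inter_subdirect_general {σ : Signature} (A B : UAlgebra σ)
    (R : Set (A.carrier × B.carrier)) (hR : Subuniverse (A.prod B) R)
    (hsub : Subdirect2 R)
    (C : Set A.carrier) (D : Set B.carrier)
    (hC : MinAbsorbing A C) (hD : MinAbsorbing B D)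
    (hne : ((C ×ˢ D) ∩ R).Nonempty) :
    (∀ c ∈ C, ∃ d ∈ D, (c, d) ∈ R) ∧ (∀ d ∈ D, ∃ c ∈ C, (c, d) ∈ R) := by
  refine ⟨hC.exists_mem_of_inter_nonempty hD.1 hR hsub.1 hne, ?_⟩
  have hne_swap : ((D ×ˢ C) ∩ Prod.swap ⁻¹' R).Nonempty := by
    obtain ⟨⟨c, d⟩, ⟨hc, hd⟩, hcd⟩ := hne
    exact ⟨(d, c), ⟨hd, hc⟩, hcd⟩
  exact hD.exists_mem_of_inter_nonempty hC.1 hR.preimage_swap hsub.2 hne_swap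

/-- If `C ◁◁ A`, `D ◁◁ B` and `(C × D) ∩ R ≠ ∅` for a subdirect
subuniverse `R` of `A × B`, then `(C × D) ∩ R` is subdirect in `C × D`. -/
theorem minabs_inter_subdirect {σ : Signature} (A B : UAlgebra σ)
    [Fintype A.carrier] [Fintype B.carrier]
    (hIA : Idempotent A) (hIB : Idempotent B)
    {k : ℕ} (t : Term σ k) (hTA : IsTaylorTerm A t) (hTB : IsTaylorTerm B t)
    (R : Set (A.carrier × B.carrier)) (hR : Subuniverse (A.prod B) R)
    (hsub : Subdirect2 R)
    (C : Set A.carrier) (D : Set B.carrier)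
    (hC : MinAbsorbing A C) (hD : MinAbsorbing B D)
    (hne : ((C ×ˢ D) ∩ R).Nonempty) :
    (∀ c ∈ C, ∃ d ∈ D, (c, d) ∈ R) ∧ (∀ d ∈ D, ∃ c ∈ C, (c, d) ∈ R) :=
  minabs_inter_subdirect_general A B R hR hsub C D hC hD hne
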